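/- Let G = (V, E, w) be an edge-weighted graph, let ε be a real with 0 < ε ≤ 1/100, and set κ = 1/(3(1+ε)). Let ρ = ⟨v_1, …, v_k⟩ be a walk in G, let f be an edge of G, and suppose f is κ-hanging at (p_1, q_1), (p_2, q_2), …, (p_l, q_l) on ρ with l ≥ 21, where for each i the position of p_i on ρ precedes that of q_i, and the position of q_i is no later than that of p_{i+1} (so the subwalks ρ[p_i, q_i] are edge-disjoint segments of ρ occurring in order). Then w(ρ[p_1, q_l]) − dist_G(p_1, q_l) ≥ (1/5)·w(ρ[p_1, q_l]); in particular dist_G(p_1, q_l) ≤ (4/5)·w(ρ[p_1, q_l]). -/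

import Mathlib

/-!
Each hanging subwalk `σ i` weighs at least `κ·w(f)`, and the `l ≥ 21` of them lie edge-disjointly
on `M`, so `w(M) ≥ 21κ·w(f) = 7·w(f)/(1+ε)`. On the other hand `p₀` is within `(1+ε)·w(f)` of
`f₁` and `q_{l-1}` within `(1+ε)·w(f)` of `f₂`, so the detour through `f` gives
`dist(p₀, q_{l-1}) ≤ (3+2ε)·w(f)`, which is at most `(4/5)·w(M)` because
`(3+2ε)(1+ε) ≤ 28/5` for `ε ≤ 1/100`.
-/

open scoped BigOperators

namespace Paper

variable {V : Type*}

/-- The weight of a walk: the sum of its edge weights, with multiplicity. -/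
noncomputable def wWalk (w : V → V → ℝ) {G : SimpleGraph V} {u v : V} (p : G.Walk u v) : ℝ :=
  (p.darts.map fun d => w d.toProd.1 d.toProd.2).sum

/-- The distance between two vertices: the infimum of the weights of walks
between them, `⊤` if there is none. -/
noncomputable def gdist (G : SimpleGraph V) (w : V → V → ℝ) (u v : V) : EReal :=
  ⨅ p : G.Walk u v, (wWalk w p : EReal)

/-- `H` is a `t`-spanner of `G` with respect to the weights `w`. -/
def IsSpanner (G : SimpleGraph V) (w : V → V → ℝ) (H : SimpleGraph V) (t : ℝ) : Prop :=
  H ≤ G ∧ ∀ u v : V, gdist H w u v ≤ (t : EReal) * gdist G w u v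

/-- The total weight of the edges of a graph. -/
noncomputable def wGraph (G : SimpleGraph V) (w : V → V → ℝ)
    (hw : ∀ a b, w a b = w b a) : ℝ :=
  ∑ᶠ e ∈ G.edgeSet, Sym2.lift ⟨w, hw⟩ e

open SimpleGraph

variable {G : SimpleGraph V} (w : V → V → ℝ)

section WalkWeight

@[simp]
lemma wWalk_nil {u : V} : wWalk w (Walk.nil : G.Walk u u) = 0 := by
  simp [wWalk]

@[simp]
lemma wWalk_cons {u v x : V} (h : G.Adj u v) (p : G.Walk v x) :
    wWalk w (Walk.cons h p) = w u v + wWalk w p := by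
  simp [wWalk]

@[simp]
lemma wWalk_append {u v x : V} (p : G.Walk u v) (q : G.Walk v x) :
    wWalk w (p.append q) = wWalk w p + wWalk w q := by
  simp [wWalk, Walk.darts_append]

lemma wWalk_reverse (hw : ∀ a b, w a b = w b a) {u v : V} (p : G.Walk u v) :
    wWalk w p.reverse = wWalk w p := by
  unfold wWalk
  rw [Walk.darts_reverse, List.map_reverse, List.sum_reverse, List.map_map]
  exact congrArg List.sum <| List.map_congr_left fun d _ => hw _ _

variable {w}

lemma wWalk_nonneg (hw0 : ∀ u v, G.Adj u v → 0 ≤ w u v) {u v : V} (p : G.Walk u v) :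
    0 ≤ wWalk w p :=
  List.sum_nonneg <| by
    simp only [List.mem_map]
    rintro _ ⟨d, -, rfl⟩
    exact hw0 _ _ d.adj

end WalkWeight

section Distance

variable {w}

lemma gdist_le_wWalk {u v : V} (p : G.Walk u v) : gdist G w u v ≤ (wWalk w p : EReal) :=
  iInf_le _ p

lemma gdist_le_of_adj {u v : V} (h : G.Adj u v) : gdist G w u v ≤ (w u v : EReal) := by
  simpa using gdist_le_wWalk (w := w) (Walk.cons h Walk.nil)

lemma gdist_nonneg (hw0 : ∀ u v, G.Adj u v → 0 ≤ w u v) (u v : V) : 0 ≤ gdist G w u v :=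
  le_iInf fun p => EReal.coe_nonneg.2 (wWalk_nonneg hw0 p)

lemma gdist_ne_bot (hw0 : ∀ u v, G.Adj u v → 0 ≤ w u v) (u v : V) : gdist G w u v ≠ ⊥ :=
  ne_bot_of_le_ne_bot EReal.zero_ne_bot (gdist_nonneg hw0 u v)

lemma gdist_comm (hw : ∀ a b, w a b = w b a) (u v : V) : gdist G w u v = gdist G w v u := by
  have swap : ∀ x y : V, gdist G w x y ≤ gdist G w y x := fun x y =>
    le_iInf fun p => (gdist_le_wWalk p.reverse).trans_eq (by rw [wWalk_reverse w hw])
  exact (swap u v).antisymm (swap v u)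

lemma gdist_triangle (hw0 : ∀ u v, G.Adj u v → 0 ≤ w u v) (u v x : V) :
    gdist G w u x ≤ gdist G w u v + gdist G w v x := by
  refine EReal.le_add_of_forall_gt (.inl (gdist_ne_bot hw0 u v))
    (.inr (gdist_ne_bot hw0 v x)) fun a ha b hb => ?_
  obtain ⟨P, hP⟩ := iInf_lt_iff.1 ha
  obtain ⟨Q, hQ⟩ := iInf_lt_iff.1 hb
  calc gdist G w u x ≤ (wWalk w (P.append Q) : EReal) := gdist_le_wWalk _
    _ = (wWalk w P : EReal) + wWalk w Q := by rw [wWalk_append, EReal.coe_add]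
    _ ≤ a + b := add_le_add hP.le hQ.le

lemma gdist_le_via_edge (hw : ∀ a b, w a b = w b a) (hw0 : ∀ u v, G.Adj u v → 0 ≤ w u v)
    {f₁ f₂ u v : V} (hf : G.Adj f₁ f₂) {a b : ℝ}
    (hu : gdist G w f₁ u ≤ a) (hv : gdist G w v f₂ ≤ b) :
    gdist G w u v ≤ ((a + w f₁ f₂ + b : ℝ) : EReal) :=
  calc gdist G w u v ≤ gdist G w u f₁ + (gdist G w f₁ f₂ + gdist G w f₂ v) :=
        (gdist_triangle hw0 u f₁ v).trans (add_le_add le_rfl (gdist_triangle hw0 f₁ f₂ v))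
    _ ≤ a + (w f₁ f₂ + b) := by
        rw [gdist_comm hw u, gdist_comm hw f₂]
        exact add_le_add hu (add_le_add (gdist_le_of_adj hf) hv)
    _ = ((a + w f₁ f₂ + b : ℝ) : EReal) := by push_cast; rw [add_assoc]

end Distance

section Chain

variable {w} (hw0 : ∀ u v, G.Adj u v → 0 ≤ w u v) {s t : V} {l : ℕ} {p q : Fin l → V}
  {σ : ∀ i : Fin l, G.Walk (p i) (q i)} {A : ∀ i : Fin l, G.Walk s (p i)}
  (hchain : ∀ (i : Fin l) (h : i.val + 1 < l),
    ∃ C : G.Walk (q i) (p ⟨i.val + 1, h⟩), A ⟨i.val + 1, h⟩ = (A i).append ((σ i).append C))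
  {c : ℝ} (hc : ∀ i, c ≤ wWalk w (σ i))
include hw0 hchain hc

lemma add_mul_le_wWalk_of_chain (j : ℕ) (hj : j < l) :
    wWalk w (A ⟨0, by omega⟩) + j * c ≤ wWalk w (A ⟨j, hj⟩) := by
  induction j with
  | zero => simp
  | succ j ih =>
    obtain ⟨C, hC⟩ := hchain ⟨j, by omega⟩ hj
    have := ih (by omega)
    have := hc ⟨j, by omega⟩
    have := wWalk_nonneg hw0 C
    rw [hC, wWalk_append, wWalk_append]
    push_cast
    linarith

lemma mul_le_wWalk_of_chain (hl : 0 < l) {B : ∀ i : Fin l, G.Walk (q i) t} {ρ : G.Walk s t}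
    (hdecomp : ρ = (A ⟨l - 1, by omega⟩).append
      ((σ ⟨l - 1, by omega⟩).append (B ⟨l - 1, by omega⟩)))
    (M : G.Walk (p ⟨0, hl⟩) (q ⟨l - 1, by omega⟩))
    (hM : ρ = (A ⟨0, hl⟩).append (M.append (B ⟨l - 1, by omega⟩))) :
    l * c ≤ wWalk w M := by
  have hweight := congrArg (wWalk w) (hM.symm.trans hdecomp)
  simp only [wWalk_append] at hweight
  have := add_mul_le_wWalk_of_chain hw0 hchain hc (l - 1) (by omega)
  have := hc ⟨l - 1, by omega⟩
  have hcount : ((l - 1 : ℕ) : ℝ) * c + c = l * c := by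
    rw [Nat.cast_sub hl]
    ring
  linarith

end Chain

lemma detour_le_of_hanging_count {ε x m : ℝ} (hε1 : -1 < ε) (hε : ε ≤ 1 / 100) (hx : 0 ≤ x)
    {l : ℕ} (hl : 21 ≤ l) (hm : l * (1 / (3 * (1 + ε)) * x) ≤ m) :
    (1 + ε) * x + x + (1 + ε) * x ≤ 4 / 5 * m := by
  have h1ε : 0 < 1 + ε := by linarith
  have h7 : 7 * x ≤ (1 + ε) * m :=
    calc 7 * x = (1 + ε) * (21 * (1 / (3 * (1 + ε)) * x)) := by field_simp; ring
      _ ≤ (1 + ε) * m := by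
        gcongr
        exact le_trans (by gcongr; exact_mod_cast hl) hm
  refine le_of_mul_le_mul_left ?_ h1ε
  calc (1 + ε) * ((1 + ε) * x + x + (1 + ε) * x) = ((1 + ε) * (3 + 2 * ε)) * x := by ring
    _ ≤ 28 / 5 * x := by gcongr; nlinarith
    _ ≤ (1 + ε) * (4 / 5 * m) := by linarith

/-- if an edge `f = (f₁,f₂)` is `κ`-hanging (with `κ = 1/(3(1+ε))`) at
`l ≥ 21` positions `(p i, q i)` on a walk `ρ`, whose hanging subwalks `σ i` occur in
order as edge-disjoint segments of `ρ` (expressed by the prefix walks `A i` and the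
chaining condition), then the segment `M = ρ[p 0, q (l-1)]` of `ρ` satisfies
`w(M) - dist_G(p 0, q (l-1)) ≥ (1/5)·w(M)`; in particular
`dist_G(p 0, q (l-1)) ≤ (4/5)·w(M)`. -/
theorem statement7 (G : SimpleGraph V) (w : V → V → ℝ)
    (hw : ∀ a b, w a b = w b a) (hpos : ∀ u v : V, G.Adj u v → 0 < w u v)
    (ε : ℝ) (hε0 : 0 < ε) (hε : ε ≤ 1/100)
    {s t f₁ f₂ : V} (hf : G.Adj f₁ f₂) (ρ : G.Walk s t)
    (l : ℕ) (hl : 21 ≤ l) (p q : Fin l → V)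
    (σ : ∀ i : Fin l, G.Walk (p i) (q i))
    (A : ∀ i : Fin l, G.Walk s (p i)) (B : ∀ i : Fin l, G.Walk (q i) t)
    (hdecomp : ∀ i : Fin l, ρ = (A i).append ((σ i).append (B i)))
    (hchain : ∀ (i : Fin l) (h : i.val + 1 < l),
      ∃ C : G.Walk (q i) (p ⟨i.val + 1, h⟩),
        A ⟨i.val + 1, h⟩ = (A i).append ((σ i).append C))
    (hhang : ∀ i : Fin l,
      (1 / (3 * (1 + ε))) * w f₁ f₂ ≤ wWalk w (σ i) ∧
      gdist G w f₁ (p i) + (wWalk w (σ i) : EReal) + gdist G w (q i) f₂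
        ≤ (((1 + ε) * w f₁ f₂ : ℝ) : EReal))
    (M : G.Walk (p ⟨0, by omega⟩) (q ⟨l - 1, by omega⟩))
    (hM : ρ = (A ⟨0, by omega⟩).append (M.append (B ⟨l - 1, by omega⟩))) :
    (((1/5) * wWalk w M : ℝ) : EReal) + gdist G w (p ⟨0, by omega⟩) (q ⟨l - 1, by omega⟩)
        ≤ ((wWalk w M : ℝ) : EReal) ∧
    gdist G w (p ⟨0, by omega⟩) (q ⟨l - 1, by omega⟩) ≤ (((4/5) * wWalk w M : ℝ) : EReal) := by
  have hw0 : ∀ u v, G.Adj u v → 0 ≤ w u v := fun u v h => (hpos u v h).le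
  have hwM : l * (1 / (3 * (1 + ε)) * w f₁ f₂) ≤ wWalk w M :=
    mul_le_wWalk_of_chain hw0 hchain (fun i => (hhang i).1) (by omega) (hdecomp _) M hM
  have hσ : ∀ i, (0 : EReal) ≤ wWalk w (σ i) := fun i => EReal.coe_nonneg.2 (wWalk_nonneg hw0 _)
  have hstart : gdist G w f₁ (p ⟨0, by omega⟩) ≤ (((1 + ε) * w f₁ f₂ : ℝ) : EReal) :=
    (le_add_of_le_of_nonneg (le_add_of_nonneg_right (hσ _)) (gdist_nonneg hw0 _ _)).trans
      (hhang _).2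
  have hend : gdist G w (q ⟨l - 1, by omega⟩) f₂ ≤ (((1 + ε) * w f₁ f₂ : ℝ) : EReal) :=
    (le_add_of_nonneg_left (add_nonneg (gdist_nonneg hw0 _ _) (hσ _))).trans (hhang _).2
  have hshort := detour_le_of_hanging_count (by linarith) hε (hw0 _ _ hf) hl hwM
  have hdist := (gdist_le_via_edge hw hw0 hf hstart hend).trans (EReal.coe_le_coe_iff.2 hshort)
  refine ⟨(add_le_add_right hdist _).trans_eq ?_, hdist⟩
  rw [← EReal.coe_add]
  ring_nf

end Paper
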